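/- Define B : (0,∞) → ℝ by B(x) = (x log x − x + 1)/(x − 1)² for x ≠ 1 and B(1) = 1/2. Then B is antitone (non-increasing) on (0,∞): for all 0 < x ≤ y, B(y) ≤ B(x). Moreover lim_{x→0⁺} B(x) = 1, so B(x) ≤ 1 for all x > 0, and lim_{x→1} B(x) = 1/2. -/

import Mathlib

open Real Filter

/-- The function `B(x) = (x log x − x + 1)/(x − 1)²`, extended by `B(1) = 1/2`. -/
noncomputable def Bfun (x : ℝ) : ℝ :=
  if x = 1 then 1 / 2 else (x * Real.log x - x + 1) / (x - 1) ^ 2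

/-! The sign of `B'(x) = (2(x - 1) - (x + 1) log x) / (x - 1)³` is that of `1 - x`, by the
classical inequality `log x ≥ 2(x - 1)/(x + 1)` for `x ≥ 1` (reversed on `(0, 1]`): the
difference vanishes at `1` and has derivative `(x - 1)² / (x (x + 1)²) ≥ 0`. Hence `B` is
antitone on `(0, 1]` and on `[1, ∞)` as soon as it is continuous at `1`, i.e. as soon as
`B → 1/2` there; one application of l'Hôpital's rule reduces this limit to
`log x / (x - 1) → 1`, the derivative of `log` at `1`. At `0`, `x log x → 0` gives `B → 1`,
and then `B ≤ 1` follows from antitonicity. -/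

open Set Topology

namespace Real

theorem monotoneOn_log_sub_two_mul_sub_one_div_add_one :
    MonotoneOn (fun x => log x - 2 * (x - 1) / (x + 1)) (Ioi 0) := by
  have hderiv : ∀ x ∈ Ioi (0 : ℝ), HasDerivAt (fun x => log x - 2 * (x - 1) / (x + 1))
      ((x - 1) ^ 2 / (x * (x + 1) ^ 2)) x := by
    intro x (hx : 0 < x)
    have hx1 : x + 1 ≠ 0 := by positivity
    refine ((hasDerivAt_log hx.ne').sub ((((hasDerivAt_id x).sub_const 1).const_mul 2).div
      ((hasDerivAt_id x).add_const 1) hx1)).congr_deriv ?_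
    simp only [id]
    field_simp
    ring
  refine monotoneOn_of_hasDerivWithinAt_nonneg (f' := fun x => (x - 1) ^ 2 / (x * (x + 1) ^ 2))
    (convex_Ioi 0) (fun x hx => (hderiv x hx).continuousAt.continuousWithinAt) ?_ ?_ <;>
    rw [interior_Ioi]
  · exact fun x hx => (hderiv x hx).hasDerivWithinAt
  · exact fun x (hx : 0 < x) => by positivity

theorem add_one_mul_log_le_of_le_one {x : ℝ} (hx0 : 0 < x) (hx1 : x ≤ 1) :
    (x + 1) * log x ≤ 2 * (x - 1) := by
  have h := monotoneOn_log_sub_two_mul_sub_one_div_add_one hx0 (mem_Ioi.2 one_pos) hx1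
  norm_num at h
  rwa [le_div_iff₀ (by positivity), mul_comm] at h

theorem two_mul_sub_one_le_add_one_mul_log {x : ℝ} (hx : 1 ≤ x) :
    2 * (x - 1) ≤ (x + 1) * log x := by
  have h := monotoneOn_log_sub_two_mul_sub_one_div_add_one (mem_Ioi.2 one_pos)
    (mem_Ioi.2 (one_pos.trans_le hx)) hx
  norm_num at h
  rw [div_le_iff₀ (by positivity)] at h
  linarith

theorem tendsto_log_div_sub_one_nhdsNE_one :
    Tendsto (fun x => log x / (x - 1)) (𝓝[≠] 1) (𝓝 1) := by
  convert (hasDerivAt_log one_ne_zero).tendsto_slope using 2 with x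
  · rw [slope_def_field, log_one, sub_zero]
  · rw [inv_one]

theorem hasDerivAt_mul_log_sub_add_one {x : ℝ} (hx : x ≠ 0) :
    HasDerivAt (fun y => y * log y - y + 1) (log x) x := by
  simpa using ((hasDerivAt_mul_log hx).sub (hasDerivAt_id x)).add_const 1

end Real

theorem hasDerivAt_sub_one_sq (x : ℝ) :
    HasDerivAt (fun y : ℝ => (y - 1) ^ 2) (2 * (x - 1)) x := by
  simpa using ((hasDerivAt_id x).sub_const 1).fun_pow 2

theorem Bfun_of_ne_one {x : ℝ} (hx : x ≠ 1) : Bfun x = (x * log x - x + 1) / (x - 1) ^ 2 :=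
  if_neg hx

theorem Bfun_one : Bfun 1 = 1 / 2 := if_pos rfl

theorem hasDerivAt_Bfun {x : ℝ} (hx0 : 0 < x) (hx1 : x ≠ 1) :
    HasDerivAt Bfun ((2 * (x - 1) - (x + 1) * log x) / (x - 1) ^ 3) x := by
  have hx1' : x - 1 ≠ 0 := sub_ne_zero.2 hx1
  refine (((hasDerivAt_mul_log_sub_add_one hx0.ne').div (hasDerivAt_sub_one_sq x)
    (pow_ne_zero 2 hx1')).congr_deriv ?_).congr_of_eventuallyEq
    ((eventually_ne_nhds hx1).mono fun _ => Bfun_of_ne_one)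
  field_simp
  ring

theorem tendsto_Bfun_nhdsNE_one : Tendsto Bfun (𝓝[≠] 1) (𝓝 (1 / 2)) := by
  have hnum0 : Tendsto (fun y => y * log y - y + 1) (𝓝[≠] 1) (𝓝 0) :=
    tendsto_nhdsWithin_of_tendsto_nhds <|
      ((continuous_mul_log.sub continuous_id).add continuous_const).tendsto' 1 0 (by simp)
  have hden0 : Tendsto (fun y : ℝ => (y - 1) ^ 2) (𝓝[≠] 1) (𝓝 0) :=
    tendsto_nhdsWithin_of_tendsto_nhds <|
      (by fun_prop : Continuous fun y : ℝ => (y - 1) ^ 2).tendsto' 1 0 (by simp)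
  have hratio : Tendsto (fun x => log x / (2 * (x - 1))) (𝓝[≠] 1) (𝓝 (1 / 2)) := by
    simpa [div_mul_eq_div_div_swap] using tendsto_log_div_sub_one_nhdsNE_one.div_const 2
  refine (HasDerivAt.lhopital_zero_nhdsNE
    (eventually_nhdsWithin_of_eventually_nhds <|
      (eventually_ne_nhds one_ne_zero).mono fun _ => hasDerivAt_mul_log_sub_add_one)
    (Eventually.of_forall hasDerivAt_sub_one_sq)
    (eventually_mem_nhdsWithin.mono fun x hx => mul_ne_zero two_ne_zero (sub_ne_zero.2 hx))
    hnum0 hden0 hratio).congr' ?_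
  filter_upwards [self_mem_nhdsWithin] with x hx using (Bfun_of_ne_one hx).symm

theorem continuousOn_Bfun : ContinuousOn Bfun (Ioi 0) := by
  intro x (hx0 : 0 < x)
  rcases eq_or_ne x 1 with rfl | hx1
  · refine (continuousWithinAt_compl_self.1 ?_).continuousWithinAt
    rw [ContinuousWithinAt, Bfun_one]
    exact tendsto_Bfun_nhdsNE_one
  · exact (hasDerivAt_Bfun hx0 hx1).continuousAt.continuousWithinAt

theorem antitoneOn_Bfun_of_one_notMem_interior {D : Set ℝ} (hD : Convex ℝ D) (hD0 : D ⊆ Ioi 0)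
    (hD1 : 1 ∉ interior D) : AntitoneOn Bfun D := by
  have hmem : ∀ x ∈ interior D, 0 < x ∧ x ≠ 1 := fun x hx =>
    ⟨hD0 (interior_subset hx), fun h => hD1 (h ▸ hx)⟩
  refine antitoneOn_of_hasDerivWithinAt_nonpos hD (continuousOn_Bfun.mono hD0)
    (fun x hx => (hasDerivAt_Bfun (hmem x hx).1 (hmem x hx).2).hasDerivWithinAt) fun x hx => ?_
  obtain ⟨hx0, hx1⟩ := hmem x hx
  rcases hx1.lt_or_gt with hlt | hgt
  · exact div_nonpos_of_nonneg_of_nonpos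
      (sub_nonneg.2 (add_one_mul_log_le_of_le_one hx0 hlt.le))
      (Odd.pow_nonpos (by decide) (by linarith))
  · exact div_nonpos_of_nonpos_of_nonneg
      (sub_nonpos.2 (two_mul_sub_one_le_add_one_mul_log hgt.le)) (by positivity)

theorem antitoneOn_Bfun : AntitoneOn Bfun (Ioi 0) := by
  rw [← Ioc_union_Ici_eq_Ioi one_pos]
  refine AntitoneOn.union_right ?_ ?_ (isGreatest_Ioc one_pos) isLeast_Ici
  · exact antitoneOn_Bfun_of_one_notMem_interior (convex_Ioc 0 1) Ioc_subset_Ioi_self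
      (by simp)
  · exact antitoneOn_Bfun_of_one_notMem_interior (convex_Ici 1)
      (fun x (hx : 1 ≤ x) => one_pos.trans_le hx) (by simp)

theorem tendsto_Bfun_nhdsGT_zero : Tendsto Bfun (𝓝[>] 0) (𝓝 1) := by
  have hcont : ContinuousAt (fun y => (y * log y - y + 1) / (y - 1) ^ 2) 0 :=
    ((continuous_mul_log.sub continuous_id).add continuous_const).continuousAt.div
      (by fun_prop) (by norm_num)
  have hlim : Tendsto (fun y => (y * log y - y + 1) / (y - 1) ^ 2) (𝓝 0) (𝓝 1) := by
    simpa using hcont.tendsto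
  refine (hlim.mono_left nhdsWithin_le_nhds).congr' ?_
  filter_upwards [Ioo_mem_nhdsGT one_pos] with x hx using (Bfun_of_ne_one hx.2.ne).symm

theorem Bfun_le_one {x : ℝ} (hx : 0 < x) : Bfun x ≤ 1 := by
  refine ge_of_tendsto tendsto_Bfun_nhdsGT_zero ?_
  filter_upwards [Ioo_mem_nhdsGT hx] with y hy using antitoneOn_Bfun hy.1 hx hy.2.le

/-- **Lemma 1**: `B` is non-increasing on `(0,∞)`; moreover `B(x) → 1` as `x → 0⁺`, so
`B(x) ≤ 1` for all `x > 0`, and `B(x) → 1/2` as `x → 1`. -/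
theorem Bfun_antitone_and_limits :
    AntitoneOn Bfun (Set.Ioi (0 : ℝ)) ∧
      Tendsto Bfun (nhdsWithin 0 (Set.Ioi (0 : ℝ))) (nhds 1) ∧
      (∀ x : ℝ, 0 < x → Bfun x ≤ 1) ∧
      Tendsto Bfun (nhdsWithin 1 {(1 : ℝ)}ᶜ) (nhds (1 / 2)) :=
  ⟨antitoneOn_Bfun, tendsto_Bfun_nhdsGT_zero, fun _ => Bfun_le_one, tendsto_Bfun_nhdsNE_one⟩
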